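/- If M : [0,1] → ℝ is continuous and strictly positive, and q : [0,1] → [0,1] is a C¹ function with q(0)=0, q(1)=1 satisfying q'(s)·sqrt(M(q(s))) = τ for all s, where τ = ∫₀¹ sqrt(M(u)) du, then ∫₀¹ M(q(s)) q'(s)² ds = τ², and for any other C¹ schedule p with p(0)=0, p(1)=1, ∫₀¹ M(p(s)) p'(s)² ds ≥ τ². -/
import Mathlib


open Real intervalIntegral

lemma aux_lower_bound
    (M : ℝ → ℝ) (hMc : ContinuousOn M (Set.Icc 0 1))
    (hMnn : ∀ u ∈ Set.Icc (0:ℝ) 1, 0 ≤ M u)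
    (τ : ℝ) (hτ : τ = ∫ u in (0:ℝ)..1, Real.sqrt (M u))
    (p p' : ℝ → ℝ) (hp : ∀ s, HasDerivAt p (p' s) s) (hp'c : Continuous p')
    (hpmap : ∀ s ∈ Set.Icc (0:ℝ) 1, p s ∈ Set.Icc (0:ℝ) 1)
    (hp0 : p 0 = 0) (hp1 : p 1 = 1) :
    τ^2 ≤ ∫ s in (0:ℝ)..1, M (p s) * (p' s)^2 := by
  have huIcc : Set.uIcc (0:ℝ) 1 = Set.Icc 0 1 := by
    rw [Set.uIcc_of_le]; norm_num
  have hpc : Continuous p := continuous_iff_continuousAt.2 fun s => (hp s).continuousAt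
  set g : ℝ → ℝ := fun u => Real.sqrt (M u) with hg
  have hgc : ContinuousOn g (Set.Icc 0 1) := Real.continuous_sqrt.comp_continuousOn hMc
  set f : ℝ → ℝ := fun s => Real.sqrt (M (p s)) * p' s with hf
  have hfc : ContinuousOn f (Set.Icc (0:ℝ) 1) :=
    (hgc.comp hpc.continuousOn hpmap).mul hp'c.continuousOn
  have hfint : IntervalIntegrable f MeasureTheory.volume 0 1 := by
    apply ContinuousOn.intervalIntegrable; rwa [huIcc]
  have hf2int : IntervalIntegrable (fun s => f s ^ 2) MeasureTheory.volume 0 1 := by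
    apply ContinuousOn.intervalIntegrable; rw [huIcc]; exact hfc.pow 2
  -- change of variables
  have hcv : (∫ s in (0:ℝ)..1, p' s • (g ∘ p) s) = ∫ u in (p 0)..(p 1), g u := by
    apply intervalIntegral.integral_comp_smul_deriv' (f := p)
    · intro x _; exact hp x
    · exact hp'c.continuousOn
    · apply hgc.mono
      rw [huIcc, Set.image_subset_iff]
      intro s hs; exact hpmap s hs
  have hfτ : (∫ s in (0:ℝ)..1, f s) = τ := by
    rw [hτ]
    rw [show (∫ s in (0:ℝ)..1, f s) = ∫ s in (0:ℝ)..1, p' s • (g ∘ p) s by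
      apply intervalIntegral.integral_congr; intro s _
      simp only [hf, hg, Function.comp, smul_eq_mul]; ring]
    rw [hcv, hp0, hp1]
  have hkey : (0:ℝ) ≤ ∫ s in (0:ℝ)..1, (f s - τ)^2 :=
    intervalIntegral.integral_nonneg (by norm_num) (fun x _ => sq_nonneg _)
  have hexp : (∫ s in (0:ℝ)..1, (f s - τ)^2)
      = (∫ s in (0:ℝ)..1, f s ^ 2) - 2*τ*(∫ s in (0:ℝ)..1, f s) + τ^2 := by
    have h1 : ∀ s, (f s - τ)^2 = f s ^ 2 - (2*τ)*f s + τ^2 := fun s => by ring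
    simp_rw [h1]
    rw [intervalIntegral.integral_add (hf2int.sub (hfint.const_mul _))
      intervalIntegrable_const,
      intervalIntegral.integral_sub hf2int (hfint.const_mul _),
      intervalIntegral.integral_const_mul, intervalIntegral.integral_const]
    simp
  have hsq : τ^2 ≤ ∫ s in (0:ℝ)..1, f s ^ 2 := by
    rw [hexp, hfτ] at hkey; nlinarith
  have heq : (∫ s in (0:ℝ)..1, f s ^ 2) = ∫ s in (0:ℝ)..1, M (p s) * (p' s)^2 := by
    apply intervalIntegral.integral_congr
    rw [huIcc]; intro s hs
    have := Real.sq_sqrt (hMnn _ (hpmap s hs))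
    simp only [hf]
    nlinarith [this]
  rwa [heq] at hsq

theorem constant_rate_schedule_optimal
    (M : ℝ → ℝ) (hMc : ContinuousOn M (Set.Icc 0 1)) (hMpos : ∀ u ∈ Set.Icc (0:ℝ) 1, 0 < M u)
    (τ : ℝ) (hτ : τ = ∫ u in (0:ℝ)..1, Real.sqrt (M u))
    (q q' : ℝ → ℝ) (hq : ∀ s, HasDerivAt q (q' s) s) (hq'c : Continuous q')
    (hqmap : ∀ s ∈ Set.Icc (0:ℝ) 1, q s ∈ Set.Icc (0:ℝ) 1)
    (hq0 : q 0 = 0) (hq1 : q 1 = 1)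
    (hconst : ∀ s ∈ Set.Icc (0:ℝ) 1, q' s * Real.sqrt (M (q s)) = τ) :
    (∫ s in (0:ℝ)..1, M (q s) * (q' s)^2) = τ^2 ∧
    ∀ (p p' : ℝ → ℝ), (∀ s, HasDerivAt p (p' s) s) → Continuous p' →
      (∀ s ∈ Set.Icc (0:ℝ) 1, p s ∈ Set.Icc (0:ℝ) 1) →
      p 0 = 0 → p 1 = 1 →
      τ^2 ≤ ∫ s in (0:ℝ)..1, M (p s) * (p' s)^2 := by
  constructor
  · have huIcc : Set.uIcc (0:ℝ) 1 = Set.Icc 0 1 := by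
      rw [Set.uIcc_of_le]; norm_num
    have : (∫ s in (0:ℝ)..1, M (q s) * (q' s)^2) = ∫ s in (0:ℝ)..1, (τ:ℝ)^2 := by
      apply intervalIntegral.integral_congr
      rw [huIcc]; intro s hs
      have h1 := hconst s hs
      have h2 := Real.sq_sqrt (hMpos _ (hqmap s hs)).le
      show M (q s) * (q' s)^2 = τ^2
      rw [← h1, mul_pow, h2]; ring
    rw [this]; simp
  · intro p p' hp hp'c hpmap hp0 hp1
    exact aux_lower_bound M hMc (fun u hu => (hMpos u hu).le) τ hτ p p' hp hp'c hpmap hp0 hp1
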